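/- arXiv:math/9806166 — 3 statements merged into one kernel-verified Lean document; each statement's English description precedes it below -/
import Mathlib

section
/- Let M₀, M₁ be countable transitive models of ZFC. Suppose M₀ ⊨ 'P is a poset, p ∈ P, and p forces that ẋ ∈ ω^ω is an increasing function not eventually dominated by any ground model function', and similarly M₁ ⊨ 'Q is a poset, q ∈ Q, and q forces that ẏ ∈ ω^ω is an increasing function not eventually dominated by any ground model function'. Then for any f ∈ ω^ω there exist an M₀-generic filter G ⊆ P with p ∈ G and an M₁-generic filter H ⊆ Q with q ∈ H such that the function n ↦ max{(ẋ/G)(n), (ẏ/H)(n)} eventually dominates f. -/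
noncomputable section

open ZFSet

/-! ### Internal first-order language of set theory and satisfaction in a set `M` -/

/-- First-order formulas of set theory, with de Bruijn variables. -/
inductive Fml : ℕ → Type
  | mem {n} (i j : Fin n) : Fml n
  | eq {n} (i j : Fin n) : Fml n
  | imp {n} : Fml n → Fml n → Fml n
  | neg {n} : Fml n → Fml n
  | all {n} : Fml (n + 1) → Fml n

namespace Fml

def and {n} (φ ψ : Fml n) : Fml n := neg (imp φ (neg ψ))
def or {n} (φ ψ : Fml n) : Fml n := imp (neg φ) ψ
def iff {n} (φ ψ : Fml n) : Fml n := (imp φ ψ).and (imp ψ φ)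
def ex {n} (φ : Fml (n + 1)) : Fml n := neg (all (neg φ))

/-- Variable renaming. -/
def rename : ∀ {m k : ℕ}, (Fin m → Fin k) → Fml m → Fml k
  | _, _, r, mem i j => mem (r i) (r j)
  | _, _, r, eq i j => eq (r i) (r j)
  | _, _, r, imp φ ψ => imp (rename r φ) (rename r ψ)
  | _, _, r, neg φ => neg (rename r φ)
  | _, _, r, all φ => all (rename (fun i => Fin.cases 0 (fun j => (r j).succ) i) φ)

end Fml

/-- Satisfaction of a formula in the structure `(M, ∈)`, with valuation `v`. -/
def SatM (M : ZFSet) : ∀ {n : ℕ}, Fml n → (Fin n → ZFSet) → Prop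
  | _, .mem i j, v => v i ∈ v j
  | _, .eq i j, v => v i = v j
  | _, .imp φ ψ, v => SatM M φ v → SatM M ψ v
  | _, .neg φ, v => ¬ SatM M φ v
  | _, .all φ, v => ∀ x : ZFSet, x ∈ M → SatM M φ (Fin.cons x v)

/-- Satisfaction for all valuations into `M`. -/
def SatAll (M : ZFSet) {n : ℕ} (φ : Fml n) : Prop :=
  ∀ v : Fin n → ZFSet, (∀ i, v i ∈ M) → SatM M φ v

/-! The axioms of ZFC. -/

def axExt : Fml 2 := .imp (.all (.iff (.mem 0 1) (.mem 0 2))) (.eq 0 1)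
def axPair : Fml 2 := .ex (.and (.mem 1 0) (.mem 2 0))
def axUnion : Fml 1 := .ex (.all (.all (.imp (.and (.mem 0 1) (.mem 1 3)) (.mem 0 2))))
def axPower : Fml 1 := .ex (.all (.imp (.all (.imp (.mem 0 1) (.mem 0 3))) (.mem 0 1)))
def axInf : Fml 0 :=
  .ex (.and (.ex (.and (.mem 0 1) (.all (.neg (.mem 0 1)))))
    (.all (.imp (.mem 0 1)
      (.ex (.and (.mem 0 2) (.and (.mem 1 0)
        (.all (.iff (.mem 0 1) (.or (.mem 0 2) (.eq 0 2))))))))))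
def axFound : Fml 1 :=
  .imp (.ex (.mem 0 1)) (.ex (.and (.mem 0 1) (.all (.imp (.mem 0 1) (.neg (.mem 0 2))))))
def axChoice : Fml 1 :=
  .imp
    (.and (.all (.imp (.mem 0 1) (.ex (.mem 0 1))))
      (.all (.imp (.mem 0 1) (.all (.imp (.mem 0 2)
        (.imp (.neg (.eq 1 0)) (.neg (.ex (.and (.mem 0 2) (.mem 0 1))))))))))
    (.ex (.all (.imp (.mem 0 2) (.ex (.and (.mem 0 1) (.and (.mem 0 2)
      (.all (.imp (.and (.mem 0 2) (.mem 0 3)) (.eq 0 1)))))))))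

/-- Separation axiom for the formula `φ(x, p₁, …, pₙ)`. -/
def axSep {n : ℕ} (φ : Fml (n + 1)) : Fml (n + 1) :=
  .ex (.all (.iff (.mem 0 1) (.and (.mem 0 2)
    (φ.rename (fun i => Fin.cases 0 (fun j => j.succ.succ.succ) i)))))

/-- Collection axiom for the formula `φ(x, y, p₁, …, pₙ)`. -/
def axColl {n : ℕ} (φ : Fml (n + 2)) : Fml (n + 1) :=
  .imp
    (.all (.imp (.mem 0 1)
      (.ex (φ.rename (fun i =>
        Fin.cases 1 (fun i' => Fin.cases 0 (fun j => j.succ.succ.succ) i') i)))))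
    (.ex (.all (.imp (.mem 0 2) (.ex (.and (.mem 0 2)
      (φ.rename (fun i =>
        Fin.cases 1 (fun i' => Fin.cases 0 (fun j => j.succ.succ.succ.succ) i') i)))))))

/-- `M` is a transitive model of ZFC (with the collection scheme). -/
def IsTransModelZFC (M : ZFSet) : Prop :=
  M.IsTransitive ∧ SatAll M axExt ∧ SatAll M axPair ∧ SatAll M axUnion ∧
    SatAll M axPower ∧ SatAll M axInf ∧ SatAll M axFound ∧ SatAll M axChoice ∧
    (∀ (n : ℕ) (φ : Fml (n + 1)), SatAll M (axSep φ)) ∧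
    (∀ (n : ℕ) (φ : Fml (n + 2)), SatAll M (axColl φ))

/-! ### Coding countable objects as elements of `ZFSet` -/

/-- The von Neumann natural numbers. -/
def natZF : ℕ → ZFSet
  | 0 => ∅
  | n + 1 => insert (natZF n) (natZF n)

/-- The code of a function `ℕ → ℕ` as a set of Kuratowski pairs. -/
def funZF (f : ℕ → ℕ) : ZFSet :=
  ZFSet.range fun n : ℕ => ZFSet.pair (natZF n) (natZF (f n))

/-- The code of a finite sequence of naturals. -/
def listZF (l : List ℕ) : ZFSet :=
  ZFSet.range fun i : Fin l.length => ZFSet.pair (natZF i) (natZF (l.get i))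

/-- The code of a set of finite sequences of naturals. -/
def listSetZF (D : Set (List ℕ)) : ZFSet :=
  ZFSet.range fun l : D => listZF l.1

end

noncomputable section

open Filter

/-- The code of a subset of a coded poset. -/
def subsetZF {P : Type} (cP : P → ZFSet) (D : Set P) : ZFSet :=
  ZFSet.range fun a : D => cP a.1

/-- The code of the order relation of a coded poset. -/
def ordZF {P : Type} [Preorder P] (cP : P → ZFSet) : ZFSet :=
  ZFSet.range fun q : {q : P × P // q.1 ≤ q.2} => ZFSet.pair (cP q.1.1) (cP q.1.2)

/-- The code of a name for an element of `ω^ω`, presented by its deciding relation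
`Dec a n m` (read: the condition `a` decides that the value at `n` is `m`). -/
def decZF {P : Type} (cP : P → ZFSet) (Dec : P → ℕ → ℕ → Prop) : ZFSet :=
  ZFSet.range fun w : {w : P × ℕ × ℕ // Dec w.1 w.2.1 w.2.2} =>
    ZFSet.pair (cP w.1.1) (ZFSet.pair (natZF w.1.2.1) (natZF w.1.2.2))

/-- `G` is an `M`-generic filter on the coded poset `P`. -/
def IsGenericFilter {P : Type} [Preorder P] (M : ZFSet) (cP : P → ZFSet)
    (G : Set P) : Prop :=
  (∀ a ∈ G, ∀ b : P, a ≤ b → b ∈ G) ∧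
    (∀ a ∈ G, ∀ b ∈ G, ∃ c ∈ G, c ≤ a ∧ c ≤ b) ∧
    ∀ D : Set P, subsetZF cP D ∈ M → (∀ a : P, ∃ b ∈ D, b ≤ a) → (G ∩ D).Nonempty

/-!
Below every condition `a ≤ p` there is a bound `s` such that extensions of `a` force
arbitrarily large values of `ẋ` at coordinates `≤ s`: otherwise the least bounds of the values
forced below `a` at coordinates `≤ k` form a function in `M₀` that `ẋ` never exceeds below `a`.

The generics are built by one recursion that meets the countably many dense sets of `M₀` and
`M₁` in turn and alternates between the two posets. If the current `P`-condition has large values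
at coordinates `≤ R`, extend it to force `ẋ t > max_{j < R'} f j` for some `t ≤ R`; as `ẋ` is
increasing, `ẋ > f` on `[R, R')`. Choosing `R'` beyond the bound of the current `Q`-condition,
extend that one in the same way to force `ẏ > f` on `[R', R'')`, and repeat from `R''`. These
intervals cover all large `n`, so `max ẋ ẏ` eventually dominates `f`.
-/
section Construction

variable {P Q : Type*} [Preorder P] [Preorder Q]

/-- `p` forces the name with deciding relation `Dec` to be an increasing function `ℕ → ℕ`. -/
structure IsIncreasingName (Dec : P → ℕ → ℕ → Prop) (p : P) : Prop where
  anti : ∀ a b : P, a ≤ b → ∀ n m, Dec b n m → Dec a n m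
  exists_dec : ∀ a : P, a ≤ p → ∀ n : ℕ, ∃ b : P, b ≤ a ∧ ∃ m, Dec b n m
  mono : ∀ a : P, a ≤ p → ∀ n n' m m', Dec a n m → Dec a n' m' → n ≤ n' → m ≤ m'

def LargeValuesBelow (Dec : P → ℕ → ℕ → Prop) (a : P) (s : ℕ) : Prop :=
  ∀ K, ∃ b ≤ a, ∃ t ≤ s, ∃ m, K < m ∧ Dec b t m

/-- For an increasing name, `a` then forces `f j < ẋ j` for `lo ≤ j < hi`. -/
def ForcesAboveOn (Dec : P → ℕ → ℕ → Prop) (f : ℕ → ℕ) (a : P) (lo hi : ℕ) : Prop :=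
  ∃ t ≤ lo, ∃ m, Dec a t m ∧ ∀ j < hi, f j < m

structure IsStep (Dec : P → ℕ → ℕ → Prop) (f : ℕ → ℕ) (D : Set P) (r lo hi : ℕ) (a a' : P) :
    Prop where
  le : a' ≤ a
  forcesAboveOn : ForcesAboveOn Dec f a' lo hi
  meets : ∃ d ∈ D, a' ≤ d
  decides : ∃ m, Dec a' r m

variable {Dec : P → ℕ → ℕ → Prop} {f : ℕ → ℕ} {p a b c : P} {lo hi : ℕ}

theorem LargeValuesBelow.mono {s s' : ℕ} (h : LargeValuesBelow Dec a s) (hs : s ≤ s') :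
    LargeValuesBelow Dec a s' := fun K =>
  let ⟨b, hb, t, ht, m, hm, hd⟩ := h K
  ⟨b, hb, t, ht.trans hs, m, hm, hd⟩

theorem LargeValuesBelow.exists_forcesAboveOn (h : LargeValuesBelow Dec a lo) (f : ℕ → ℕ)
    (hi : ℕ) : ∃ b ≤ a, ForcesAboveOn Dec f b lo hi := by
  obtain ⟨b, hb, t, ht, m, hm, hd⟩ := h ((Finset.range hi).sup f)
  exact ⟨b, hb, t, ht, m, hd, fun j hj => (Finset.le_sup (Finset.mem_range.2 hj)).trans_lt hm⟩

namespace IsIncreasingName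

theorem forcesAboveOn_of_le (hx : IsIncreasingName Dec p) (h : ForcesAboveOn Dec f a lo hi)
    (hba : b ≤ a) : ForcesAboveOn Dec f b lo hi :=
  let ⟨t, ht, m, hd, hf⟩ := h
  ⟨t, ht, m, hx.anti b a hba t m hd, hf⟩

theorem lt_of_forcesAboveOn (hx : IsIncreasingName Dec p) (hc : c ≤ p) (hca : c ≤ a)
    (hcb : c ≤ b) (ha : ForcesAboveOn Dec f a lo hi) {j v : ℕ} (hb : Dec b j v) (hlo : lo ≤ j)
    (hhi : j < hi) :
    f j < v := by
  obtain ⟨t, ht, m, hd, hf⟩ := ha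
  exact (hf j hhi).trans_le
    (hx.mono c hc t j m v (hx.anti c a hca t m hd) (hx.anti c b hcb j v hb) (ht.trans hlo))

theorem exists_isStep (hx : IsIncreasingName Dec p) (ha : a ≤ p)
    (hL : LargeValuesBelow Dec a lo) {D : Set P} (hD : IsCoinitial D) (r hi : ℕ) :
    ∃ a', IsStep Dec f D r lo hi a a' := by
  obtain ⟨a₁, ha₁, hF⟩ := hL.exists_forcesAboveOn f hi
  obtain ⟨d, hdD, hd⟩ := hD a₁
  obtain ⟨a', ha', m, hm⟩ := hx.exists_dec d (hd.trans (ha₁.trans ha)) r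
  exact ⟨a', ⟨ha'.trans (hd.trans ha₁), hx.forcesAboveOn_of_le hF (ha'.trans hd),
    ⟨d, hdD, ha'⟩, m, hm⟩⟩

end IsIncreasingName

structure Stage (Dec₀ : P → ℕ → ℕ → Prop) (p : P) (q : Q) where
  a : P
  b : Q
  R : ℕ
  a_le : a ≤ p
  b_le : b ≤ q
  large : LargeValuesBelow Dec₀ a R

structure Stage.Next {Dec₀ : P → ℕ → ℕ → Prop} {q : Q} (Dec₁ : Q → ℕ → ℕ → Prop) (f : ℕ → ℕ)
    (D₀ : Set P) (D₁ : Set Q) (r : ℕ) (S : Stage Dec₀ p q) (R' : ℕ) (S' : Stage Dec₀ p q) :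
    Prop where
  lt_mid : S.R < R'
  mid_lt : R' < S'.R
  stepA : IsStep Dec₀ f D₀ r S.R R' S.a S'.a
  stepB : IsStep Dec₁ f D₁ r R' S'.R S.b S'.b

variable {Dec₀ : P → ℕ → ℕ → Prop} {Dec₁ : Q → ℕ → ℕ → Prop} {q : Q}

theorem Stage.exists_next (hx : IsIncreasingName Dec₀ p) (hy : IsIncreasingName Dec₁ q)
    (hlx : ∀ a ≤ p, ∃ s, LargeValuesBelow Dec₀ a s)
    (hly : ∀ b ≤ q, ∃ s, LargeValuesBelow Dec₁ b s)
    {D₀ : Set P} {D₁ : Set Q} (hD₀ : IsCoinitial D₀) (hD₁ : IsCoinitial D₁) (f : ℕ → ℕ)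
    (r : ℕ) (S : Stage Dec₀ p q) : ∃ R' S', S.Next Dec₁ f D₀ D₁ r R' S' := by
  -- `R'` lies beyond the coordinates at which `S.b` forces large values of `ẏ`.
  obtain ⟨sb, hsb⟩ := hly S.b S.b_le
  obtain ⟨a', ha'⟩ := hx.exists_isStep (f := f) S.a_le S.large hD₀ r (max (S.R + 1) sb)
  have ha'p : a' ≤ p := ha'.le.trans S.a_le
  obtain ⟨sa, hsa⟩ := hlx a' ha'p
  obtain ⟨b', hb'⟩ := hy.exists_isStep (f := f) S.b_le (hsb.mono (le_max_right _ _)) hD₁ r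
    (max (max (S.R + 1) sb + 1) sa)
  exact ⟨_, ⟨a', b', _, ha'p, hb'.le.trans S.b_le, hsa.mono (le_max_right _ _)⟩,
    lt_max_of_lt_left (Nat.lt_succ_self _), lt_max_of_lt_left (Nat.lt_succ_self _), ha', hb'⟩

theorem eventually_le_max_of_cover {f x y R R' : ℕ → ℕ} (hR : ∀ r, R r < R' r ∧ R' r < R (r + 1))
    (hx : ∀ r j, R r ≤ j → j < R' r → f j < x j)
    (hy : ∀ r j, R' r ≤ j → j < R (r + 1) → f j < y j) :
    ∀ᶠ j in atTop, f j ≤ max (x j) (y j) := by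
  have key : ∀ r j, R 0 ≤ j → j < R r → f j ≤ max (x j) (y j) := by
    intro r
    induction r with
    | zero => intro j h0 hj; omega
    | succ r ih =>
      intro j h0 hj
      rcases lt_or_ge j (R r) with h | h
      · exact ih j h0 h
      rcases lt_or_ge j (R' r) with h' | h'
      · exact (hx r j h h').le.trans (le_max_left _ _)
      · exact (hy r j h' hj).le.trans (le_max_right _ _)
  have hmono : StrictMono R := strictMono_nat_of_lt_succ fun r => (hR r).1.trans (hR r).2
  filter_upwards [eventually_ge_atTop (R 0)] with j hj
  exact key (j + 1) j hj ((Nat.lt_succ_self j).trans_le (hmono.id_le _))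

theorem exists_antitone_max_dominating (hx : IsIncreasingName Dec₀ p)
    (hy : IsIncreasingName Dec₁ q) (hlx : ∀ a ≤ p, ∃ s, LargeValuesBelow Dec₀ a s)
    (hly : ∀ b ≤ q, ∃ s, LargeValuesBelow Dec₁ b s) {e₀ : ℕ → Set P} {e₁ : ℕ → Set Q}
    (he₀ : ∀ r, IsCoinitial (e₀ r)) (he₁ : ∀ r, IsCoinitial (e₁ r)) (f : ℕ → ℕ) :
    ∃ (a : ℕ → P) (b : ℕ → Q), Antitone a ∧ Antitone b ∧ a 0 = p ∧ b 0 = q ∧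
      (∀ r, ∃ d ∈ e₀ r, a (r + 1) ≤ d) ∧ (∀ r, ∃ d ∈ e₁ r, b (r + 1) ≤ d) ∧
      ∃ x y : ℕ → ℕ, (∀ n, Dec₀ (a (n + 1)) n (x n)) ∧ (∀ n, Dec₁ (b (n + 1)) n (y n)) ∧
        ∀ᶠ n in atTop, f n ≤ max (x n) (y n) := by
  obtain ⟨s₀, hs₀⟩ := hlx p le_rfl
  choose mid next hnext using
    fun r S => Stage.exists_next hx hy hlx hly (he₀ r) (he₁ r) f r S
  let S : ℕ → Stage Dec₀ p q := fun n => Nat.rec ⟨p, q, s₀, le_rfl, le_rfl, hs₀⟩ next n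
  have hS (r : ℕ) : (S r).Next Dec₁ f (e₀ r) (e₁ r) r (mid r (S r)) (S (r + 1)) :=
    hnext r (S r)
  have ha : Antitone fun r => (S r).a := antitone_nat_of_succ_le fun r => (hS r).stepA.le
  have hb : Antitone fun r => (S r).b := antitone_nat_of_succ_le fun r => (hS r).stepB.le
  choose x hxdec using fun r => (hS r).stepA.decides
  choose y hydec using fun r => (hS r).stepB.decides
  refine ⟨_, _, ha, hb, rfl, rfl, fun r => (hS r).stepA.meets, fun r => (hS r).stepB.meets,
    x, y, hxdec, hydec, eventually_le_max_of_cover (fun r => ⟨(hS r).lt_mid, (hS r).mid_lt⟩)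
      (fun r j hlo hhi => ?_) (fun r j hlo hhi => ?_)⟩
  · exact hx.lt_of_forcesAboveOn (S (max (r + 1) (j + 1))).a_le (ha (le_max_left _ _))
      (ha (le_max_right _ _)) (hS r).stepA.forcesAboveOn (hxdec j) hlo hhi
  · exact hy.lt_of_forcesAboveOn (S (max (r + 1) (j + 1))).b_le (hb (le_max_left _ _))
      (hb (le_max_right _ _)) (hS r).stepB.forcesAboveOn (hydec j) hlo hhi

end Construction

section GenericFilter

variable {P : Type} {M : ZFSet} {cP : P → ZFSet}

theorem mem_subsetZF {x : ZFSet} {D : Set P} : x ∈ subsetZF cP D ↔ ∃ a ∈ D, cP a = x := by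
  simp [subsetZF]

theorem subsetZF_injective (hcP : Function.Injective cP) : Function.Injective (subsetZF cP) := by
  intro D D' h
  ext a
  have key (E : Set P) : a ∈ E ↔ cP a ∈ subsetZF cP E := by
    rw [mem_subsetZF]
    exact ⟨fun h => ⟨a, h, rfl⟩, fun ⟨a', ha', he⟩ => hcP he ▸ ha'⟩
  rw [key D, key D', h]

theorem exists_enum_codedDense [Preorder P] (hMc : M.toSet.Countable)
    (hcP : Function.Injective cP) :
    ∃ e : ℕ → Set P, (∀ r, IsCoinitial (e r)) ∧
      ∀ D, subsetZF cP D ∈ M → IsCoinitial D → ∃ r, e r = D := by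
  have hcount : {D : Set P | subsetZF cP D ∈ M ∧ IsCoinitial D}.Countable :=
    (hMc.preimage (subsetZF_injective hcP)).mono fun D hD => hD.1
  obtain ⟨e, he⟩ := (hcount.insert Set.univ).exists_eq_range (Set.insert_nonempty _ _)
  refine ⟨e, fun r => ?_, fun D hDM hD => he.subset (Set.mem_insert_of_mem _ ⟨hDM, hD⟩)⟩
  rcases he.symm.subset (Set.mem_range_self r) with h | h
  · exact h ▸ fun c => ⟨c, trivial, le_rfl⟩
  · exact h.2

theorem isGenericFilter_of_antitone [Preorder P] {a : ℕ → P} (ha : Antitone a) {e : ℕ → Set P}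
    (he : ∀ D, subsetZF cP D ∈ M → IsCoinitial D → ∃ r, e r = D)
    (hmeet : ∀ r, ∃ d ∈ e r, a (r + 1) ≤ d) : IsGenericFilter M cP {c | ∃ r, a r ≤ c} := by
  refine ⟨fun c ⟨r, hr⟩ c' hc => ⟨r, hr.trans hc⟩, fun c ⟨r, hr⟩ c' ⟨r', hr'⟩ =>
    ⟨a (max r r'), ⟨_, le_rfl⟩, (ha (le_max_left r r')).trans hr,
      (ha (le_max_right r r')).trans hr'⟩, fun D hDM hD => ?_⟩
  obtain ⟨r, rfl⟩ := he D hDM hD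
  obtain ⟨d, hd, hle⟩ := hmeet r
  exact ⟨d, ⟨r + 1, hle⟩, hd⟩

end GenericFilter

open ZFSet

section Satisfaction

variable {M : ZFSet} {n : ℕ} {v : Fin n → ZFSet}

theorem satM_rename : ∀ {m k : ℕ} (r : Fin m → Fin k) (φ : Fml m) (v : Fin k → ZFSet),
    SatM M (φ.rename r) v ↔ SatM M φ (v ∘ r)
  | _, _, _, .mem _ _, _ => Iff.rfl
  | _, _, _, .eq _ _, _ => Iff.rfl
  | _, _, r, .imp φ ψ, v => imp_congr (satM_rename r φ v) (satM_rename r ψ v)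
  | _, _, r, .neg φ, v => not_congr (satM_rename r φ v)
  | _, _, r, .all φ, v => by
      refine forall₂_congr fun x _ => ?_
      rw [satM_rename _ φ _]
      have : (Fin.cons x v ∘ fun i => Fin.cases 0 (fun j => (r j).succ) i)
          = Fin.cons x (v ∘ r) := by
        funext i
        refine Fin.cases ?_ (fun j => ?_) i <;> simp
      rw [this]

theorem satM_mem {i j : Fin n} : SatM M (.mem i j) v ↔ v i ∈ v j := Iff.rfl

theorem satM_eq {i j : Fin n} : SatM M (.eq i j) v ↔ v i = v j := Iff.rfl

theorem satM_imp {φ ψ : Fml n} : SatM M (.imp φ ψ) v ↔ (SatM M φ v → SatM M ψ v) := Iff.rfl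

theorem satM_neg {φ : Fml n} : SatM M (.neg φ) v ↔ ¬ SatM M φ v := Iff.rfl

theorem satM_all {φ : Fml (n + 1)} :
    SatM M (.all φ) v ↔ ∀ x ∈ M, SatM M φ (Fin.cons x v) := Iff.rfl

theorem satM_and {φ ψ : Fml n} : SatM M (φ.and ψ) v ↔ SatM M φ v ∧ SatM M ψ v := by
  simp only [Fml.and, satM_neg, satM_imp]
  tauto

theorem satM_or {φ ψ : Fml n} : SatM M (φ.or ψ) v ↔ SatM M φ v ∨ SatM M ψ v := by
  simp only [Fml.or, satM_imp, satM_neg]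
  tauto

theorem satM_iff {φ ψ : Fml n} : SatM M (φ.iff ψ) v ↔ (SatM M φ v ↔ SatM M ψ v) := by
  simp only [Fml.iff, satM_and, satM_imp]
  tauto

theorem satM_ex {φ : Fml (n + 1)} : SatM M (.ex φ) v ↔ ∃ x ∈ M, SatM M φ (Fin.cons x v) := by
  simp only [Fml.ex, satM_neg, satM_all]
  push Not
  rfl

theorem forall_cons_mem {x : ZFSet} (hx : x ∈ M) (hv : ∀ i, v i ∈ M) :
    ∀ i, (Fin.cons x v : Fin (n + 1) → ZFSet) i ∈ M :=
  fun i => Fin.cases hx hv i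

end Satisfaction

theorem Fin.cons_two {n : ℕ} {α : Type*} (x : α) (v : Fin (n + 2) → α) :
    (Fin.cons x v : Fin (n + 3) → α) 2 = v 1 := rfl

theorem Fin.cons_three {n : ℕ} {α : Type*} (x : α) (v : Fin (n + 3) → α) :
    (Fin.cons x v : Fin (n + 4) → α) 3 = v 2 := rfl

section NatZF

theorem mem_natZF {z : ZFSet} {n : ℕ} : z ∈ natZF n ↔ ∃ m < n, z = natZF m := by
  induction n with
  | zero => simp [natZF]
  | succ n ih =>
    simp only [natZF, mem_insert_iff, ih, Nat.lt_succ_iff_lt_or_eq]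
    constructor
    · rintro (rfl | ⟨m, hm, rfl⟩)
      exacts [⟨n, Or.inr rfl, rfl⟩, ⟨m, Or.inl hm, rfl⟩]
    · rintro ⟨m, hm | rfl, rfl⟩
      exacts [Or.inr ⟨m, hm, rfl⟩, Or.inl rfl]

theorem rank_natZF (n : ℕ) : rank (natZF n) = n := by
  induction n with
  | zero => exact rank_empty
  | succ n ih =>
    rw [natZF, rank_insert, ih, max_eq_left (Order.le_succ _), Order.succ_eq_add_one]
    push_cast
    rfl

theorem natZF_mem_natZF {m n : ℕ} : natZF m ∈ natZF n ↔ m < n :=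
  ⟨fun h => by simpa [rank_natZF] using rank_lt_of_mem h, fun h => mem_natZF.2 ⟨m, h, rfl⟩⟩

theorem natZF_injective : Function.Injective natZF := fun m n h => by
  simpa [rank_natZF] using congrArg rank h

theorem natZF_mem_or_eq_iff {m n : ℕ} : natZF m ∈ natZF n ∨ natZF m = natZF n ↔ m ≤ n := by
  rw [natZF_mem_natZF, natZF_injective.eq_iff]
  omega

theorem isTransitive_natZF (n : ℕ) : (natZF n).IsTransitive := by
  intro y hy z hz
  obtain ⟨m, hm, rfl⟩ := mem_natZF.1 hy
  obtain ⟨k, hk, rfl⟩ := mem_natZF.1 hz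
  exact natZF_mem_natZF.2 (hk.trans hm)

def IsZeroOrSucc (z : ZFSet) : Prop := z = ∅ ∨ ∃ u ∈ z, z = insert u u

theorem isZeroOrSucc_natZF : ∀ n, IsZeroOrSucc (natZF n)
  | 0 => Or.inl rfl
  | n + 1 => Or.inr ⟨natZF n, mem_insert _ _, rfl⟩

theorem exists_eq_natZF {x : ZFSet} (h₁ : x.IsTransitive) (h₂ : ∀ y ∈ x, y.IsTransitive)
    (h₃ : IsZeroOrSucc x) (h₄ : ∀ y ∈ x, IsZeroOrSucc y) : ∃ n, x = natZF n := by
  induction x using ZFSet.inductionOn with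
  | _ x IH =>
    rcases h₃ with rfl | ⟨u, hu, hx⟩
    · exact ⟨0, rfl⟩
    · obtain ⟨n, hn⟩ := IH u hu (h₂ u hu) (fun y hy => h₂ y (h₁ u hu hy)) (h₄ u hu)
        (fun y hy => h₄ y (h₁ u hu hy))
      exact ⟨n + 1, by rw [hx, hn]; rfl⟩

end NatZF

namespace IsTransModelZFC

variable {M : ZFSet}

theorem mem_of_mem (hM : IsTransModelZFC M) {x y : ZFSet} (hx : x ∈ M) (hy : y ∈ x) : y ∈ M :=
  hM.1.mem_trans hy hx

theorem exists_sep (hM : IsTransModelZFC M) {n : ℕ} (φ : Fml (n + 1)) {A : ZFSet} (hA : A ∈ M)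
    {pv : Fin n → ZFSet} (hpv : ∀ i, pv i ∈ M) :
    ∃ S ∈ M, ∀ x, x ∈ S ↔ x ∈ A ∧ SatM M φ (Fin.cons x pv) := by
  have hsep := hM.2.2.2.2.2.2.2.2.1 n φ (Fin.cons A pv) (fun i => Fin.cases hA hpv i)
  simp only [axSep, satM_ex, satM_all, satM_iff, satM_mem, satM_and, satM_rename,
    Fin.cons_zero, Fin.cons_one, Fin.cons_two] at hsep
  obtain ⟨S, hSM, hS⟩ := hsep
  have hren (x : ZFSet) : (Fin.cons x (Fin.cons S (Fin.cons A pv)) ∘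
      fun i : Fin (n + 1) => Fin.cases 0 (fun j => j.succ.succ.succ) i) = Fin.cons x pv := by
    funext i
    refine Fin.cases ?_ (fun j => ?_) i <;> simp
  refine ⟨S, hSM, fun x => ⟨fun hx => ?_, fun hx => ?_⟩⟩
  · exact hren x ▸ (hS x (hM.mem_of_mem hSM hx)).1 hx
  · exact (hS x (hM.mem_of_mem hA hx.1)).2 (hren x ▸ hx)

theorem doubleton_mem (hM : IsTransModelZFC M) {a b : ZFSet} (ha : a ∈ M) (hb : b ∈ M) :
    ({a, b} : ZFSet) ∈ M := by
  have hv : ∀ i, (![a, b] : Fin 2 → ZFSet) i ∈ M := fun i => by fin_cases i <;> assumption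
  have hpair := hM.2.2.1 _ hv
  simp only [axPair, satM_ex, satM_and, satM_mem, Fin.cons_zero, Fin.cons_one,
    Fin.cons_two] at hpair
  obtain ⟨c, hcM, hac, hbc⟩ := hpair
  obtain ⟨S, hSM, hS⟩ := hM.exists_sep ((Fml.eq 0 1).or (.eq 0 2)) hcM hv
  simp only [Matrix.cons_val_zero, Matrix.cons_val_one] at hac hbc
  convert hSM using 1
  ext z
  simp only [hS, satM_or, satM_eq, Fin.cons_zero, Fin.cons_one, Fin.cons_two, mem_pair,
    Matrix.cons_val_zero, Matrix.cons_val_one]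
  constructor
  · rintro (rfl | rfl)
    exacts [⟨hac, Or.inl rfl⟩, ⟨hbc, Or.inr rfl⟩]
  · exact And.right

theorem singleton_mem (hM : IsTransModelZFC M) {a : ZFSet} (ha : a ∈ M) : ({a} : ZFSet) ∈ M :=
  pair_eq_singleton a ▸ hM.doubleton_mem ha ha

theorem pair_mem (hM : IsTransModelZFC M) {a b : ZFSet} (ha : a ∈ M) (hb : b ∈ M) :
    ZFSet.pair a b ∈ M :=
  hM.doubleton_mem (hM.singleton_mem ha) (hM.doubleton_mem ha hb)

theorem exists_forall_natZF_mem (hM : IsTransModelZFC M) : ∃ w ∈ M, ∀ n : ℕ, natZF n ∈ w := by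
  have hinf := hM.2.2.2.2.2.1 Fin.elim0 (fun i => i.elim0)
  simp only [axInf, satM_ex, satM_and, satM_mem, satM_all, satM_neg, satM_imp, satM_iff,
    satM_or, satM_eq, Fin.cons_zero, Fin.cons_one, Fin.cons_two] at hinf
  obtain ⟨w, hwM, ⟨z, hzM, hzw, hzE⟩, hsucc⟩ := hinf
  have hz : z = ∅ := (eq_empty z).2 fun u hu => hzE u (hM.mem_of_mem hzM hu) hu
  refine ⟨w, hwM, fun n => ?_⟩
  induction n with
  | zero => rw [natZF, ← hz]; exact hzw
  | succ n ih =>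
    have hnM : natZF n ∈ M := hM.mem_of_mem hwM ih
    obtain ⟨s, hsM, hsw, -, hs⟩ := hsucc (natZF n) hnM ih
    convert hsw using 1
    ext u
    rw [natZF, ZFSet.mem_insert_iff]
    constructor
    · rintro (rfl | hu)
      exacts [(hs _ hnM).2 (Or.inr rfl), (hs u (hM.mem_of_mem hnM hu)).2 (Or.inl hu)]
    · intro hu
      exact ((hs u (hM.mem_of_mem hsM hu)).1 hu).symm

theorem natZF_mem (hM : IsTransModelZFC M) (n : ℕ) : natZF n ∈ M :=
  let ⟨_, hwM, hw⟩ := hM.exists_forall_natZF_mem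
  hM.mem_of_mem hwM (hw n)

theorem exists_powerset_superset (hM : IsTransModelZFC M) {A : ZFSet} (hA : A ∈ M) :
    ∃ C ∈ M, ∀ x ∈ M, x ⊆ A → x ∈ C := by
  have h := hM.2.2.2.2.1 ![A] (fun i => by fin_cases i; exact hA)
  simp only [axPower, satM_ex, satM_all, satM_imp, satM_mem, Fin.cons_zero, Fin.cons_one,
    Fin.cons_two, Fin.cons_three, Matrix.cons_val_zero] at h
  obtain ⟨C, hCM, hC⟩ := h
  exact ⟨C, hCM, fun x hxM hxA => hC x hxM fun t _ ht => hxA ht⟩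

end IsTransModelZFC

namespace Fml

variable {n : ℕ}

def transitive (x : Fin n) : Fml n :=
  .all (.imp (.mem 0 x.succ) (.all (.imp (.mem 0 1) (.mem 0 x.succ.succ))))

def succEq (x u : Fin n) : Fml n :=
  .all (.iff (.mem 0 x.succ) ((Fml.mem 0 u.succ).or (.eq 0 u.succ)))

def zeroOrSucc (x : Fin n) : Fml n :=
  (Fml.all (.neg (.mem 0 x.succ))).or (.ex ((Fml.mem 0 x.succ).and (succEq x.succ 0)))

def natural : Fml 1 :=
  (transitive 0).and ((Fml.all (.imp (.mem 0 1) (transitive 0))).and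
    ((zeroOrSucc 0).and (.all (.imp (.mem 0 1) (zeroOrSucc 0)))))

def singleton (u a : Fin n) : Fml n := .all (.iff (.mem 0 u.succ) (.eq 0 a.succ))

def doubleton (u a b : Fin n) : Fml n :=
  .all (.iff (.mem 0 u.succ) ((Fml.eq 0 a.succ).or (.eq 0 b.succ)))

def kpair (z a b : Fin n) : Fml n :=
  .all (.iff (.mem 0 z.succ) ((singleton 0 a.succ).or (doubleton 0 a.succ b.succ)))

def natLe (k l : Fin n) : Fml n := (Fml.mem k l).or (.eq k l)

def triple (w b k m : Fin n) : Fml n :=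
  .ex ((kpair w.succ b.succ 0).and (kpair 0 k.succ m.succ))

end Fml

section Definability

variable {M : ZFSet} {n : ℕ} {v : Fin n → ZFSet}

theorem forall_mem_iff_iff_eq (hM : M.IsTransitive) {x S : ZFSet} (hx : x ∈ M)
    (hS : ∀ t ∈ S, t ∈ M) {p : ZFSet → Prop} (hp : ∀ t, p t ↔ t ∈ S) :
    (∀ t ∈ M, t ∈ x ↔ p t) ↔ x = S := by
  simp only [hp]
  exact ⟨fun h => ZFSet.ext fun t =>
    ⟨fun ht => (h t (hM.mem_trans ht hx)).1 ht, fun ht => (h t (hS t ht)).2 ht⟩,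
    fun h _ _ => by rw [h]⟩

theorem satM_transitive (hM : M.IsTransitive) (x : Fin n) (hx : v x ∈ M) :
    SatM M (Fml.transitive x) v ↔ (v x).IsTransitive := by
  simp only [Fml.transitive, satM_all, satM_imp, satM_mem, Fin.cons_succ, Fin.cons_zero,
    Fin.cons_one]
  constructor
  · intro h y hy z hz
    exact h y (hM.mem_trans hy hx) hy z (hM.mem_trans hz (hM.mem_trans hy hx)) hz
  · intro h y _ hy z _ hz
    exact h y hy hz

theorem satM_succEq (hM : M.IsTransitive) (x u : Fin n) (hx : v x ∈ M) (hu : v u ∈ M) :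
    SatM M (Fml.succEq x u) v ↔ v x = insert (v u) (v u) := by
  simp only [Fml.succEq, satM_all, satM_iff, satM_mem, satM_or, satM_eq, Fin.cons_succ,
    Fin.cons_zero]
  refine forall_mem_iff_iff_eq hM hx (fun t ht => ?_) fun t => by
    rw [ZFSet.mem_insert_iff, or_comm]
  rcases ZFSet.mem_insert_iff.1 ht with rfl | ht
  exacts [hu, hM.mem_trans ht hu]

theorem satM_zeroOrSucc (hM : M.IsTransitive) (x : Fin n) (hx : v x ∈ M) :
    SatM M (Fml.zeroOrSucc x) v ↔ IsZeroOrSucc (v x) := by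
  simp only [Fml.zeroOrSucc, satM_or, satM_all, satM_neg, satM_mem, satM_ex, satM_and,
    Fin.cons_succ, Fin.cons_zero, IsZeroOrSucc, eq_empty]
  refine or_congr ⟨fun h t ht => h t (hM.mem_trans ht hx) ht, fun h t _ => h t⟩
    ⟨fun ⟨u, huM, hux, hu⟩ => ⟨u, hux, ?_⟩, fun ⟨u, hux, hu⟩ => ⟨u, hM.mem_trans hux hx, hux, ?_⟩⟩
  · simpa using (satM_succEq (v := Fin.cons u v) hM x.succ 0 hx huM).1 hu
  · simpa using (satM_succEq (v := Fin.cons u v) hM x.succ 0 hx (hM.mem_trans hux hx)).2 hu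

theorem satM_natural (hM : M.IsTransitive) {x : ZFSet} (hx : x ∈ M) (v : Fin 0 → ZFSet) :
    SatM M Fml.natural (Fin.cons x v) ↔ ∃ k, x = natZF k := by
  simp only [Fml.natural, satM_and, satM_all, satM_imp, satM_mem, Fin.cons_one]
  constructor
  · rintro ⟨h₁, h₂, h₃, h₄⟩
    refine exists_eq_natZF ((satM_transitive hM 0 hx).1 h₁)
      (fun y hy => (satM_transitive hM 0 (hM.mem_trans hy hx)).1 (h₂ y (hM.mem_trans hy hx) hy))
      ((satM_zeroOrSucc hM 0 hx).1 h₃)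
      (fun y hy => (satM_zeroOrSucc hM 0 (hM.mem_trans hy hx)).1 (h₄ y (hM.mem_trans hy hx) hy))
  · rintro ⟨k, rfl⟩
    refine ⟨(satM_transitive hM 0 hx).2 (isTransitive_natZF k),
      fun y hyM hy => (satM_transitive hM 0 hyM).2 ?_, (satM_zeroOrSucc hM 0 hx).2
      (isZeroOrSucc_natZF k), fun y hyM hy => (satM_zeroOrSucc hM 0 hyM).2 ?_⟩
    · obtain ⟨m, -, rfl⟩ := mem_natZF.1 hy
      exact isTransitive_natZF m
    · obtain ⟨m, -, rfl⟩ := mem_natZF.1 hy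
      exact isZeroOrSucc_natZF m

theorem satM_singleton (hM : M.IsTransitive) (u a : Fin n) (hu : v u ∈ M) (ha : v a ∈ M) :
    SatM M (Fml.singleton u a) v ↔ v u = {v a} := by
  simp only [Fml.singleton, satM_all, satM_iff, satM_mem, satM_eq, Fin.cons_succ, Fin.cons_zero]
  exact forall_mem_iff_iff_eq hM hu (fun t ht => mem_singleton.1 ht ▸ ha)
    fun t => mem_singleton.symm

theorem satM_doubleton (hM : M.IsTransitive) (u a b : Fin n) (hu : v u ∈ M) (ha : v a ∈ M)
    (hb : v b ∈ M) : SatM M (Fml.doubleton u a b) v ↔ v u = {v a, v b} := by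
  simp only [Fml.doubleton, satM_all, satM_iff, satM_mem, satM_or, satM_eq, Fin.cons_succ,
    Fin.cons_zero]
  refine forall_mem_iff_iff_eq hM hu (fun t ht => ?_) fun t => mem_pair.symm
  rcases mem_pair.1 ht with rfl | rfl
  exacts [ha, hb]

theorem satM_natLe {k l : Fin n} {k₀ l₀ : ℕ} (hk : v k = natZF k₀) (hl : v l = natZF l₀) :
    SatM M (Fml.natLe k l) v ↔ k₀ ≤ l₀ := by
  simp only [Fml.natLe, satM_or, satM_mem, satM_eq, hk, hl]
  exact natZF_mem_or_eq_iff

end Definability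

section ModelZFC

variable {M : ZFSet} {n : ℕ} {v : Fin n → ZFSet}

theorem IsTransModelZFC.exists_omega (hM : IsTransModelZFC M) :
    ∃ Ω ∈ M, ∀ x, x ∈ Ω ↔ ∃ k, x = natZF k := by
  obtain ⟨w, hwM, hw⟩ := hM.exists_forall_natZF_mem
  obtain ⟨S, hSM, hS⟩ := hM.exists_sep Fml.natural hwM (pv := Fin.elim0) fun i => i.elim0
  refine ⟨S, hSM, fun x => (hS x).trans ⟨fun ⟨hxw, hsat⟩ => ?_, ?_⟩⟩
  · exact (satM_natural hM.1 (hM.mem_of_mem hwM hxw) _).1 hsat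
  · rintro ⟨k, rfl⟩
    exact ⟨hw k, (satM_natural hM.1 (hM.natZF_mem k) _).2 ⟨k, rfl⟩⟩

theorem satM_kpair (hM : IsTransModelZFC M) (z a b : Fin n) (hz : v z ∈ M) (ha : v a ∈ M)
    (hb : v b ∈ M) : SatM M (Fml.kpair z a b) v ↔ v z = ZFSet.pair (v a) (v b) := by
  have hcomp : ∀ t ∈ M, (t ∈ v z ↔ SatM M (Fml.singleton 0 a.succ) (Fin.cons t v) ∨
      SatM M (Fml.doubleton 0 a.succ b.succ) (Fin.cons t v)) ↔
      (t ∈ v z ↔ t = {v a} ∨ t = {v a, v b}) := fun t ht => by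
    rw [satM_singleton hM.1 0 a.succ ht ha, satM_doubleton hM.1 0 a.succ b.succ ht ha hb]
    simp only [Fin.cons_zero, Fin.cons_succ]
  simp only [Fml.kpair, satM_all, satM_iff, satM_or, satM_mem, Fin.cons_zero, Fin.cons_succ]
  rw [forall₂_congr hcomp]
  refine forall_mem_iff_iff_eq hM.1 hz (fun t ht => ?_) fun t => mem_pair.symm
  rcases mem_pair.1 ht with rfl | rfl
  exacts [hM.singleton_mem ha, hM.doubleton_mem ha hb]

theorem satM_triple (hM : IsTransModelZFC M) (w b k m : Fin n) (hv : ∀ i, v i ∈ M) :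
    SatM M (Fml.triple w b k m) v ↔ v w = ZFSet.pair (v b) (ZFSet.pair (v k) (v m)) := by
  simp only [Fml.triple, satM_ex, satM_and]
  constructor
  · rintro ⟨u, huM, h₁, h₂⟩
    rw [satM_kpair (v := Fin.cons u v) hM w.succ b.succ 0 (hv w) (hv b) huM] at h₁
    rw [satM_kpair (v := Fin.cons u v) hM 0 k.succ m.succ huM (hv k) (hv m)] at h₂
    simp only [Fin.cons_succ, Fin.cons_zero] at h₁ h₂
    rw [h₁, h₂]
  · intro h
    have huM := hM.pair_mem (hv k) (hv m)
    refine ⟨_, huM, ?_, ?_⟩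
    · exact (satM_kpair (v := Fin.cons _ v) hM w.succ b.succ 0 (hv w) (hv b) huM).2 h
    · exact (satM_kpair (v := Fin.cons _ v) hM 0 k.succ m.succ huM (hv k) (hv m)).2 rfl

end ModelZFC

namespace Fml

variable {n : ℕ}

def ordMem (b c O : Fin n) : Fml n := .ex ((Fml.mem 0 O.succ).and (kpair 0 b.succ c.succ))

def valuesBounded (nn K D O c : Fin n) : Fml n :=
  .all (.imp (.mem 0 D.succ) (.all (.all (.all (
    .imp (triple 3 2 1 0)
      (.imp (ordMem 2 c.succ.succ.succ.succ O.succ.succ.succ.succ)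
        (.imp (natLe 1 nn.succ.succ.succ.succ) (natLe 0 K.succ.succ.succ.succ))))))))

/-- Free variables `z, Ω, D, O, c`: `z = ⟨k, K⟩` with `k, K ∈ Ω` and `K` least such that
`valuesBounded k K D O c`. -/
def leastBoundGraph : Fml 5 :=
  .ex ((Fml.mem 0 2).and
    (.ex ((Fml.mem 0 3).and
      ((kpair 2 1 0).and
        ((valuesBounded 1 0 4 5 6).and
          (.all (.imp (.mem 0 1) (.neg (valuesBounded 2 0 5 6 7)))))))))

end Fml

section CodedPoset

variable {P : Type} {cP : P → ZFSet} {Dec : P → ℕ → ℕ → Prop} {M : ZFSet}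
  {n : ℕ} {v : Fin n → ZFSet}

theorem mem_ordZF [Preorder P] {x : ZFSet} :
    x ∈ ordZF cP ↔ ∃ a b : P, a ≤ b ∧ x = ZFSet.pair (cP a) (cP b) := by
  simp [ordZF, eq_comm]

theorem mem_decZF {x : ZFSet} :
    x ∈ decZF cP Dec ↔
      ∃ b k m, Dec b k m ∧ x = ZFSet.pair (cP b) (ZFSet.pair (natZF k) (natZF m)) := by
  simp [decZF, eq_comm]

theorem mem_funZF {x : ZFSet} {g : ℕ → ℕ} :
    x ∈ funZF g ↔ ∃ k, x = ZFSet.pair (natZF k) (natZF (g k)) := by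
  simp [funZF, eq_comm]

theorem satM_ordMem [Preorder P] (hM : IsTransModelZFC M) (hcP : Function.Injective cP)
    (hOM : ordZF cP ∈ M) {b c O : Fin n} {b₀ a₀ : P} (hb : v b = cP b₀) (hc : v c = cP a₀)
    (hO : v O = ordZF cP) (hv : ∀ i, v i ∈ M) :
    SatM M (Fml.ordMem b c O) v ↔ b₀ ≤ a₀ := by
  simp only [Fml.ordMem, satM_ex, satM_and, satM_mem, Fin.cons_succ, Fin.cons_zero, hO]
  constructor
  · rintro ⟨w, hwM, hwO, hw⟩
    rw [satM_kpair (v := Fin.cons w v) hM 0 b.succ c.succ hwM (hv b) (hv c)] at hw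
    obtain ⟨b₁, a₁, hle, rfl⟩ := mem_ordZF.1 hwO
    obtain ⟨e₁, e₂⟩ :=
      ZFSet.pair_injective (hw.trans (by rw [Fin.cons_succ, Fin.cons_succ, hb, hc]))
    rwa [← hcP e₁, ← hcP e₂]
  · intro h
    have hwO : ZFSet.pair (cP b₀) (cP a₀) ∈ ordZF cP := mem_ordZF.2 ⟨b₀, a₀, h, rfl⟩
    have hwM := hM.mem_of_mem hOM hwO
    refine ⟨_, hwM, hwO, ?_⟩
    exact (satM_kpair (v := Fin.cons _ v) hM 0 b.succ c.succ hwM (hv b) (hv c)).2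
      (by rw [Fin.cons_succ, Fin.cons_succ, hb, hc]; rfl)

def ValuesBoundedBelow [Preorder P] (Dec : P → ℕ → ℕ → Prop) (a : P) (n K : ℕ) : Prop :=
  ∀ b k m, b ≤ a → k ≤ n → Dec b k m → m ≤ K

theorem satM_valuesBounded [Preorder P] (hM : IsTransModelZFC M) (hcP : Function.Injective cP)
    (hPM : ZFSet.range cP ∈ M) (hOM : ordZF cP ∈ M) (hDM : decZF cP Dec ∈ M)
    {nn K D O c : Fin n} {n₀ K₀ : ℕ} {a₀ : P} (hnn : v nn = natZF n₀) (hK : v K = natZF K₀)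
    (hD : v D = decZF cP Dec) (hO : v O = ordZF cP) (hc : v c = cP a₀) (hv : ∀ i, v i ∈ M) :
    SatM M (Fml.valuesBounded nn K D O c) v ↔ ValuesBoundedBelow Dec a₀ n₀ K₀ := by
  simp only [Fml.valuesBounded, satM_all, satM_imp, satM_mem, Fin.cons_succ, Fin.cons_zero, hD]
  constructor
  · intro h b k m hba hkn hdec
    have hwD := mem_decZF (cP := cP).2 ⟨b, k, m, hdec, rfl⟩
    have hwM := hM.mem_of_mem hDM hwD
    have hbM := hM.mem_of_mem hPM (ZFSet.mem_range.2 ⟨b, rfl⟩)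
    have hkM := hM.natZF_mem k
    have hmM := hM.natZF_mem m
    have hv' := forall_cons_mem hmM (forall_cons_mem hkM (forall_cons_mem hbM
      (forall_cons_mem hwM hv)))
    refine (satM_natLe (by rfl) (by exact hK)).1 (h _ hwM hwD _ hbM _ hkM _ hmM
      ((satM_triple hM 3 2 1 0 hv').2 rfl) ?_ ((satM_natLe (by rfl) (by exact hnn)).2 hkn))
    exact (satM_ordMem hM hcP hOM (by rfl) (by exact hc) (by exact hO) hv').2 hba
  · intro h w hwM hwD xb hxb xk hxk xm hxm htrip hord hle
    obtain ⟨b, k, m, hdec, rfl⟩ := mem_decZF.1 hwD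
    have hv' := forall_cons_mem hxm (forall_cons_mem hxk (forall_cons_mem hxb
      (forall_cons_mem hwM hv)))
    obtain ⟨rfl, hkm⟩ := ZFSet.pair_injective ((satM_triple hM 3 2 1 0 hv').1 htrip).symm
    obtain ⟨rfl, rfl⟩ := ZFSet.pair_injective hkm
    refine (satM_natLe (by rfl) (by exact hK)).2 (h b k m ?_
      ((satM_natLe (by rfl) (by exact hnn)).1 hle) hdec)
    exact (satM_ordMem hM hcP hOM (by rfl) (by exact hc) (by exact hO) hv').1 hord

end CodedPoset

section LeastBound

variable {P : Type} [Preorder P] {cP : P → ZFSet} {Dec : P → ℕ → ℕ → Prop} {M : ZFSet}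

theorem satM_leastBoundGraph (hM : IsTransModelZFC M) (hcP : Function.Injective cP)
    (hPM : ZFSet.range cP ∈ M) (hOM : ordZF cP ∈ M) (hDM : decZF cP Dec ∈ M) {Ω : ZFSet}
    (hΩM : Ω ∈ M) (hΩ : ∀ x, x ∈ Ω ↔ ∃ k, x = natZF k) (a : P) {z : ZFSet} (hz : z ∈ M) :
    SatM M Fml.leastBoundGraph ![z, Ω, decZF cP Dec, ordZF cP, cP a] ↔
      ∃ k K, z = ZFSet.pair (natZF k) (natZF K) ∧
        IsLeast {K | ValuesBoundedBelow Dec a k K} K := by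
  have hv : ∀ i, (![z, Ω, decZF cP Dec, ordZF cP, cP a] : Fin 5 → ZFSet) i ∈ M := by
    have := hM.mem_of_mem hPM (ZFSet.mem_range.2 ⟨a, rfl⟩)
    intro i
    fin_cases i <;> assumption
  simp only [Fml.leastBoundGraph, satM_ex, satM_and, satM_mem, satM_all, satM_imp, satM_neg]
  constructor
  · rintro ⟨x, hxM, hxΩ, y, hyM, hyΩ, hpair, hK, hmin⟩
    obtain ⟨k, rfl⟩ := (hΩ x).1 hxΩ
    obtain ⟨K, rfl⟩ := (hΩ y).1 hyΩ
    have hv₂ := forall_cons_mem hyM (forall_cons_mem hxM hv)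
    refine ⟨k, K, (satM_kpair hM 2 1 0 (hv₂ 2) (hv₂ 1) (hv₂ 0)).1 hpair,
      (satM_valuesBounded hM hcP hPM hOM hDM (by rfl) (by rfl) (by rfl) (by rfl) (by rfl)
        hv₂).1 hK, fun K' hK' => ?_⟩
    by_contra! hlt
    exact hmin _ (hM.natZF_mem K') (natZF_mem_natZF.2 hlt)
      ((satM_valuesBounded hM hcP hPM hOM hDM (by rfl) (by rfl) (by rfl) (by rfl) (by rfl)
        (forall_cons_mem (hM.natZF_mem K') hv₂)).2 hK')
  · rintro ⟨k, K, rfl, hK, hmin⟩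
    have hv₂ := forall_cons_mem (hM.natZF_mem K) (forall_cons_mem (hM.natZF_mem k) hv)
    refine ⟨natZF k, hM.natZF_mem k, (hΩ _).2 ⟨k, rfl⟩, natZF K, hM.natZF_mem K,
      (hΩ _).2 ⟨K, rfl⟩, (satM_kpair hM 2 1 0 (hv₂ 2) (hv₂ 1) (hv₂ 0)).2 rfl,
      (satM_valuesBounded hM hcP hPM hOM hDM (by rfl) (by rfl) (by rfl) (by rfl) (by rfl)
        hv₂).2 hK, fun y hyM hy hsat => ?_⟩
    obtain ⟨j, hj, rfl⟩ := mem_natZF.1 hy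
    exact (hmin ((satM_valuesBounded hM hcP hPM hOM hDM (by rfl) (by rfl) (by rfl) (by rfl)
      (by rfl) (forall_cons_mem hyM hv₂)).1 hsat)).not_gt hj

theorem IsTransModelZFC.funZF_mem_of_isLeast (hM : IsTransModelZFC M)
    (hcP : Function.Injective cP) (hPM : ZFSet.range cP ∈ M) (hOM : ordZF cP ∈ M)
    (hDM : decZF cP Dec ∈ M) (a : P) {g : ℕ → ℕ}
    (hg : ∀ k, IsLeast {K | ValuesBoundedBelow Dec a k K} (g k)) : funZF g ∈ M := by
  obtain ⟨Ω, hΩM, hΩ⟩ := hM.exists_omega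
  obtain ⟨C₁, hC₁M, hC₁⟩ := hM.exists_powerset_superset hΩM
  obtain ⟨C₂, hC₂M, hC₂⟩ := hM.exists_powerset_superset hC₁M
  -- Pairs of naturals lie in `C₂`, so separation from `C₂` carves out the graph of `g`.
  have hpv : ∀ i, (![Ω, decZF cP Dec, ordZF cP, cP a] : Fin 4 → ZFSet) i ∈ M := by
    have := hM.mem_of_mem hPM (ZFSet.mem_range.2 ⟨a, rfl⟩)
    intro i
    fin_cases i <;> assumption
  obtain ⟨S, hSM, hS⟩ := hM.exists_sep Fml.leastBoundGraph hC₂M hpv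
  convert hSM using 1
  ext z
  rw [mem_funZF, hS]
  constructor
  · rintro ⟨k, rfl⟩
    have hk := hM.natZF_mem k
    have hgk := hM.natZF_mem (g k)
    have hkΩ := (hΩ _).2 ⟨k, rfl⟩
    have hgkΩ := (hΩ _).2 ⟨g k, rfl⟩
    refine ⟨hC₂ _ (hM.pair_mem hk hgk) fun t ht => ?_, (satM_leastBoundGraph hM hcP hPM hOM hDM
      hΩM hΩ a (hM.pair_mem hk hgk)).2 ⟨k, g k, rfl, hg k⟩⟩
    rcases mem_pair.1 ht with rfl | rfl
    · exact hC₁ _ (hM.singleton_mem hk) fun s hs => mem_singleton.1 hs ▸ hkΩ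
    · refine hC₁ _ (hM.doubleton_mem hk hgk) fun s hs => ?_
      rcases mem_pair.1 hs with rfl | rfl
      exacts [hkΩ, hgkΩ]
  · rintro ⟨hzC, hsat⟩
    obtain ⟨k, K, rfl, hK⟩ := (satM_leastBoundGraph hM hcP hPM hOM hDM hΩM hΩ a
      (hM.mem_of_mem hC₂M hzC)).1 hsat
    exact ⟨k, by rw [(hg k).unique hK]⟩

/-- Otherwise the least bound of the values forced below `a` at coordinates `≤ k` is a
function in `M`, and `ẋ` never exceeds it below `a`. -/
theorem exists_largeValuesBelow (hM : IsTransModelZFC M) (hcP : Function.Injective cP)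
    (hPM : ZFSet.range cP ∈ M) (hOM : ordZF cP ∈ M) (hDM : decZF cP Dec ∈ M) {p : P}
    (hunb : ∀ g : ℕ → ℕ, funZF g ∈ M → ∀ a : P, a ≤ p → ∀ N : ℕ,
      ∃ b : P, b ≤ a ∧ ∃ n m, N ≤ n ∧ Dec b n m ∧ g n < m) :
    ∀ a ≤ p, ∃ s, LargeValuesBelow Dec a s := by
  intro a ha
  by_contra! hsmall
  have hne (k : ℕ) : {K | ValuesBoundedBelow Dec a k K}.Nonempty := by
    obtain ⟨K, hK⟩ := not_forall.1 (hsmall k)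
    refine ⟨K, fun b t m hba ht hd => ?_⟩
    by_contra! hlt
    exact hK ⟨b, hba, t, ht, m, hlt, hd⟩
  obtain ⟨b, hba, k, m, -, hdec, hlt⟩ := hunb _ (hM.funZF_mem_of_isLeast hcP hPM hOM hDM a
    fun k => isLeast_csInf (hne k)) a ha 0
  exact hlt.not_ge ((isLeast_csInf (hne k)).1 b k m hba le_rfl hdec)

end LeastBound

theorem mutual_generics_with_max_dominating_general
    (M₀ M₁ : ZFSet) (hM₀ : IsTransModelZFC M₀) (hM₁ : IsTransModelZFC M₁)
    (hM₀c : M₀.toSet.Countable) (hM₁c : M₁.toSet.Countable)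
    (P : Type) [Preorder P] (cP : P → ZFSet) (hcP : Function.Injective cP)
    (hPM : ZFSet.range cP ∈ M₀) (hPordM : ordZF cP ∈ M₀)
    (Q : Type) [Preorder Q] (cQ : Q → ZFSet) (hcQ : Function.Injective cQ)
    (hQM : ZFSet.range cQ ∈ M₁) (hQordM : ordZF cQ ∈ M₁)
    (p : P) (q : Q)
    (Dec₀ : P → ℕ → ℕ → Prop) (hDec₀M : decZF cP Dec₀ ∈ M₀)
    (Dec₁ : Q → ℕ → ℕ → Prop) (hDec₁M : decZF cQ Dec₁ ∈ M₁)
    -- `Dec₀` is a name for an element of `ω^ω`: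
    (h₀pers : ∀ a b : P, a ≤ b → ∀ n m, Dec₀ b n m → Dec₀ a n m)
    (h₀tot : ∀ a : P, a ≤ p → ∀ n : ℕ, ∃ b : P, b ≤ a ∧ ∃ m, Dec₀ b n m)
    -- `p` forces `ẋ` increasing:
    (h₀incr : ∀ a : P, a ≤ p → ∀ n n' m m', Dec₀ a n m → Dec₀ a n' m' → n ≤ n' → m ≤ m')
    -- `p` forces `ẋ` not eventually dominated by any ground model function:
    (h₀unb : ∀ g : ℕ → ℕ, funZF g ∈ M₀ → ∀ a : P, a ≤ p → ∀ N : ℕ,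
      ∃ b : P, b ≤ a ∧ ∃ n m, N ≤ n ∧ Dec₀ b n m ∧ g n < m)
    (h₁pers : ∀ a b : Q, a ≤ b → ∀ n m, Dec₁ b n m → Dec₁ a n m)
    (h₁tot : ∀ a : Q, a ≤ q → ∀ n : ℕ, ∃ b : Q, b ≤ a ∧ ∃ m, Dec₁ b n m)
    (h₁incr : ∀ a : Q, a ≤ q → ∀ n n' m m', Dec₁ a n m → Dec₁ a n' m' → n ≤ n' → m ≤ m')
    (h₁unb : ∀ g : ℕ → ℕ, funZF g ∈ M₁ → ∀ a : Q, a ≤ q → ∀ N : ℕ,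
      ∃ b : Q, b ≤ a ∧ ∃ n m, N ≤ n ∧ Dec₁ b n m ∧ g n < m)
    (f : ℕ → ℕ) :
    ∃ G : Set P, ∃ H : Set Q,
      IsGenericFilter M₀ cP G ∧ IsGenericFilter M₁ cQ H ∧ p ∈ G ∧ q ∈ H ∧
      ∃ x y : ℕ → ℕ,
        (∀ n, ∃ a ∈ G, Dec₀ a n (x n)) ∧ (∀ n, ∃ b ∈ H, Dec₁ b n (y n)) ∧
        ∀ᶠ n in atTop, f n ≤ max (x n) (y n) := by
  obtain ⟨e₀, he₀, he₀D⟩ := exists_enum_codedDense hM₀c hcP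
  obtain ⟨e₁, he₁, he₁D⟩ := exists_enum_codedDense hM₁c hcQ
  obtain ⟨a, b, ha, hb, ha₀, hb₀, hmeet₀, hmeet₁, x, y, hx, hy, hdom⟩ :=
    exists_antitone_max_dominating ⟨h₀pers, h₀tot, h₀incr⟩ ⟨h₁pers, h₁tot, h₁incr⟩
      (exists_largeValuesBelow hM₀ hcP hPM hPordM hDec₀M h₀unb)
      (exists_largeValuesBelow hM₁ hcQ hQM hQordM hDec₁M h₁unb) he₀ he₁ f
  exact ⟨_, _, isGenericFilter_of_antitone ha he₀D hmeet₀,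
    isGenericFilter_of_antitone hb he₁D hmeet₁, ⟨0, ha₀.le⟩, ⟨0, hb₀.le⟩, x, y,
    fun n => ⟨a (n + 1), ⟨n + 1, le_rfl⟩, hx n⟩, fun n => ⟨b (n + 1), ⟨n + 1, le_rfl⟩, hy n⟩,
    hdom⟩

/-- Let `M₀, M₁` be countable transitive models of ZFC, with `M₀ ⊨ “P is a poset, p ∈ P,
and p ⊩ ẋ ∈ ω^ω is an increasing function not eventually dominated by any ground model
function”` (the name `ẋ` presented by its deciding relation `Dec₀ ∈ M₀`), and similarly
for `M₁, Q, q, ẏ, Dec₁`. Then for every `f ∈ ω^ω` there are an `M₀`-generic `G ∋ p` and an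
`M₁`-generic `H ∋ q` such that `n ↦ max((ẋ/G)(n), (ẏ/H)(n))` eventually dominates `f`. -/
theorem mutual_generics_with_max_dominating
    (M₀ M₁ : ZFSet) (hM₀ : IsTransModelZFC M₀) (hM₁ : IsTransModelZFC M₁)
    (hM₀c : M₀.toSet.Countable) (hM₁c : M₁.toSet.Countable)
    (P : Type) [Preorder P] (cP : P → ZFSet) (hcP : Function.Injective cP)
    (hPM : ZFSet.range cP ∈ M₀) (hPordM : ordZF cP ∈ M₀)
    (Q : Type) [Preorder Q] (cQ : Q → ZFSet) (hcQ : Function.Injective cQ)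
    (hQM : ZFSet.range cQ ∈ M₁) (hQordM : ordZF cQ ∈ M₁)
    (p : P) (q : Q)
    (Dec₀ : P → ℕ → ℕ → Prop) (hDec₀M : decZF cP Dec₀ ∈ M₀)
    (Dec₁ : Q → ℕ → ℕ → Prop) (hDec₁M : decZF cQ Dec₁ ∈ M₁)
    -- `Dec₀` is a name for an element of `ω^ω`:
    (h₀pers : ∀ a b : P, a ≤ b → ∀ n m, Dec₀ b n m → Dec₀ a n m)
    (h₀uniq : ∀ (a : P) (n m m' : ℕ), Dec₀ a n m → Dec₀ a n m' → m = m')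
    (h₀tot : ∀ a : P, a ≤ p → ∀ n : ℕ, ∃ b : P, b ≤ a ∧ ∃ m, Dec₀ b n m)
    -- `p` forces `ẋ` increasing:
    (h₀incr : ∀ a : P, a ≤ p → ∀ n n' m m', Dec₀ a n m → Dec₀ a n' m' → n ≤ n' → m ≤ m')
    -- `p` forces `ẋ` not eventually dominated by any ground model function:
    (h₀unb : ∀ g : ℕ → ℕ, funZF g ∈ M₀ → ∀ a : P, a ≤ p → ∀ N : ℕ,
      ∃ b : P, b ≤ a ∧ ∃ n m, N ≤ n ∧ Dec₀ b n m ∧ g n < m)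
    (h₁pers : ∀ a b : Q, a ≤ b → ∀ n m, Dec₁ b n m → Dec₁ a n m)
    (h₁uniq : ∀ (a : Q) (n m m' : ℕ), Dec₁ a n m → Dec₁ a n m' → m = m')
    (h₁tot : ∀ a : Q, a ≤ q → ∀ n : ℕ, ∃ b : Q, b ≤ a ∧ ∃ m, Dec₁ b n m)
    (h₁incr : ∀ a : Q, a ≤ q → ∀ n n' m m', Dec₁ a n m → Dec₁ a n' m' → n ≤ n' → m ≤ m')
    (h₁unb : ∀ g : ℕ → ℕ, funZF g ∈ M₁ → ∀ a : Q, a ≤ q → ∀ N : ℕ,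
      ∃ b : Q, b ≤ a ∧ ∃ n m, N ≤ n ∧ Dec₁ b n m ∧ g n < m)
    (f : ℕ → ℕ) :
    ∃ G : Set P, ∃ H : Set Q,
      IsGenericFilter M₀ cP G ∧ IsGenericFilter M₁ cQ H ∧ p ∈ G ∧ q ∈ H ∧
      ∃ x y : ℕ → ℕ,
        (∀ n, ∃ a ∈ G, Dec₀ a n (x n)) ∧ (∀ n, ∃ b ∈ H, Dec₁ b n (y n)) ∧
        ∀ᶠ n in atTop, f n ≤ max (x n) (y n) :=
  mutual_generics_with_max_dominating_general M₀ M₁ hM₀ hM₁ hM₀c hM₁c P cP hcP hPM hPordM Q cQ hcQ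
    hQM hQordM p q Dec₀ hDec₀M Dec₁ hDec₁M h₀pers h₀tot h₀incr h₀unb h₁pers h₁tot h₁incr h₁unb f

end
end

section
/- Suppose T is a family of functions such that: every f ∈ T is a finite-to-one function from some countable ordinal α into ω; for every α ∈ ω₁ there is f ∈ T with dom(f) = α; every two functions in T agree modulo finite on the intersection of their domains; and T is closed under finite modifications of its elements. For f, g ∈ T with dom(f) = dom(g), define h(f,g)(e) = g ∪ (e ∖ f) for e ∈ T with f ⊆ e. Then each h(f,g) is a well-defined level-preserving isomorphism of the trees T↾f and T↾g (where T is ordered by reverse inclusion and T↾f = {e ∈ T : e ⊆ f or f ⊆ e}), and the family {h(f,g)} satisfies commutativity (h(g,k)∘h(f,g) = h(f,k) on T↾f for f,g,k of equal domain) and coherence (if f ⊆ e₀ and e₁ = h(f,g)(e₀), then h(e₀,e₁) = h(f,g)↾(T↾e₀)). -/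
noncomputable section

open scoped Classical

/-- The first uncountable ordinal. -/
def omega1 : Ordinal := (Cardinal.aleph 1).ord

/-- `f` (a set of pairs) is the graph of a function with domain the ordinal `α`. -/
def IsFnOn (f : Set (Ordinal × ℕ)) (α : Ordinal) : Prop :=
  (∀ p ∈ f, p.1 < α) ∧ ∀ β < α, ∃! m : ℕ, (β, m) ∈ f

/-- `f` is finite-to-one: preimages of singletons are finite. -/
def FinToOne (f : Set (Ordinal × ℕ)) : Prop := ∀ m : ℕ, {β : Ordinal | (β, m) ∈ f}.Finite

/-- The map `h(f,g)`: on extensions `e ⊇ f` it is `g ∪ (e ∖ f)`; on restrictions `e ⊆ f`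
it is the restriction of `g` to the domain of `e`. -/
def coherMap (f g e : Set (Ordinal × ℕ)) : Set (Ordinal × ℕ) :=
  if f ⊆ e then g ∪ (e \ f) else {p ∈ g | ∃ m : ℕ, (p.1, m) ∈ e}

/-- The cone `T↾f`: the elements of `T` comparable with `f` under inclusion of graphs. -/
def cone (T : Set (Set (Ordinal × ℕ))) (f : Set (Ordinal × ℕ)) :
    Set (Set (Ordinal × ℕ)) :=
  {e ∈ T | e ⊆ f ∨ f ⊆ e}

/-! ### Auxiliary lemmas -/

lemma fn_dom_le {e f : Set (Ordinal × ℕ)} {α β : Ordinal}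
    (he : IsFnOn e β) (hf : IsFnOn f α) (hef : e ⊆ f) : β ≤ α := by
  by_contra h
  push_neg at h
  obtain ⟨m, hm, -⟩ := he.2 α h
  exact absurd (hf.1 _ (hef hm)) (lt_irrefl α)

lemma restrict_mem {e f : Set (Ordinal × ℕ)} {α β : Ordinal}
    (he : IsFnOn e β) (hf : IsFnOn f α) (hef : e ⊆ f)
    {p : Ordinal × ℕ} (hp : p ∈ f) (hlt : p.1 < β) : p ∈ e := by
  obtain ⟨m, hm, -⟩ := he.2 p.1 hlt
  obtain ⟨n, -, hn⟩ := hf.2 p.1 (hf.1 p hp)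
  have h1 : m = n := hn m (hef hm)
  have h2 : p.2 = n := hn p.2 (by simpa using hp)
  have hpe : p = (p.1, m) := by
    ext
    · rfl
    · rw [h1, ← h2]
  rw [hpe]; exact hm

lemma fn_eq_of_subset {e f : Set (Ordinal × ℕ)} {α : Ordinal}
    (he : IsFnOn e α) (hf : IsFnOn f α) (hef : e ⊆ f) : f ⊆ e :=
  fun p hp => restrict_mem he hf hef hp (hf.1 p hp)

lemma diff_coord_ge {e f : Set (Ordinal × ℕ)} {α β : Ordinal}
    (hf : IsFnOn f α) (he : IsFnOn e β) (hfe : f ⊆ e)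
    {p : Ordinal × ℕ} (hp : p ∈ e) (hp2 : p ∉ f) : α ≤ p.1 := by
  by_contra h
  push_neg at h
  exact hp2 (restrict_mem hf he hfe hp h)

lemma union_isFnOn {f g e : Set (Ordinal × ℕ)} {α β : Ordinal}
    (hf : IsFnOn f α) (hg : IsFnOn g α) (he : IsFnOn e β) (hfe : f ⊆ e) :
    IsFnOn (g ∪ (e \ f)) β := by
  have hαβ : α ≤ β := fn_dom_le hf he hfe
  constructor
  · rintro p (hp | ⟨hp, -⟩)
    · exact lt_of_lt_of_le (hg.1 p hp) hαβ
    · exact he.1 p hp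
  · intro γ hγ
    by_cases hγα : γ < α
    · obtain ⟨m, hm, hmu⟩ := hg.2 γ hγα
      refine ⟨m, Or.inl hm, ?_⟩
      rintro n (hn | ⟨hn, hnf⟩)
      · exact hmu n hn
      · exact absurd (diff_coord_ge hf he hfe hn hnf) (not_le.mpr hγα)
    · push_neg at hγα
      obtain ⟨m, hm, hmu⟩ := he.2 γ hγ
      have hmf : (γ, m) ∉ f := fun hmem => absurd (hf.1 _ hmem) (not_lt.mpr hγα)
      refine ⟨m, Or.inr ⟨hm, hmf⟩, ?_⟩
      rintro n (hn | ⟨hn, -⟩)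
      · exact absurd (hg.1 _ hn) (not_lt.mpr hγα)
      · exact hmu n hn

lemma restrict_isFnOn {g e : Set (Ordinal × ℕ)} {α β : Ordinal}
    (hg : IsFnOn g α) (he : IsFnOn e β) (hβα : β ≤ α) :
    IsFnOn {p ∈ g | ∃ m : ℕ, (p.1, m) ∈ e} β := by
  constructor
  · rintro p ⟨-, m, hm⟩
    exact he.1 (p.1, m) hm
  · intro γ hγ
    obtain ⟨m, hm, hmu⟩ := hg.2 γ (lt_of_lt_of_le hγ hβα)
    obtain ⟨n, hn, -⟩ := he.2 γ hγ
    exact ⟨m, ⟨hm, n, hn⟩, fun k hk => hmu k hk.1⟩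

lemma union_diff_cancel' {f g e : Set (Ordinal × ℕ)} {α β : Ordinal}
    (hf : IsFnOn f α) (hg : IsFnOn g α) (he : IsFnOn e β) (hfe : f ⊆ e) :
    (g ∪ (e \ f)) \ g = e \ f := by
  ext p
  simp only [Set.mem_diff, Set.mem_union]
  constructor
  · rintro ⟨hp | hp, hpg⟩
    · exact absurd hp hpg
    · exact hp
  · intro hp
    exact ⟨Or.inr hp,
      fun hpg => absurd (hg.1 p hpg) (not_lt.mpr (diff_coord_ge hf he hfe hp.1 hp.2))⟩

lemma not_subset_restrict {g e : Set (Ordinal × ℕ)} {α β : Ordinal}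
    (hg : IsFnOn g α) (he : IsFnOn e β) (hβ : β < α) :
    ¬ g ⊆ {p ∈ g | ∃ m : ℕ, (p.1, m) ∈ e} := by
  obtain ⟨m, hm, -⟩ := hg.2 β hβ
  intro hsub
  obtain ⟨-, n, hn⟩ := hsub hm
  exact absurd (he.1 _ hn) (lt_irrefl β)

lemma restrict_congr {g e e' : Set (Ordinal × ℕ)} {β : Ordinal}
    (he : IsFnOn e β) (he' : IsFnOn e' β) :
    {p ∈ g | ∃ m : ℕ, (p.1, m) ∈ e} = {p ∈ g | ∃ m : ℕ, (p.1, m) ∈ e'} := by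
  ext p
  simp only [Set.mem_setOf_eq]
  constructor
  · rintro ⟨hp, m, hm⟩
    obtain ⟨n, hn, -⟩ := he'.2 p.1 (he.1 (p.1, m) hm)
    exact ⟨hp, n, hn⟩
  · rintro ⟨hp, m, hm⟩
    obtain ⟨n, hn, -⟩ := he.2 p.1 (he'.1 (p.1, m) hm)
    exact ⟨hp, n, hn⟩

lemma restrict_eq_self {f e : Set (Ordinal × ℕ)} {α β : Ordinal}
    (hf : IsFnOn f α) (he : IsFnOn e β) (hef : e ⊆ f) :
    {p ∈ f | ∃ m : ℕ, (p.1, m) ∈ e} = e := by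
  ext p
  simp only [Set.mem_setOf_eq]
  constructor
  · rintro ⟨hp, m, hm⟩
    exact restrict_mem he hf hef hp (he.1 (p.1, m) hm)
  · intro hp
    exact ⟨hef hp, p.2, by simpa using hp⟩

lemma diff_union_diff {f e0 e : Set (Ordinal × ℕ)} (h1 : f ⊆ e0) (h2 : e0 ⊆ e) :
    (e0 \ f) ∪ (e \ e0) = e \ f := by
  ext p
  simp only [Set.mem_union, Set.mem_diff]
  constructor
  · rintro (⟨hp, hpf⟩ | ⟨hp, hpe0⟩)
    · exact ⟨h2 hp, hpf⟩
    · exact ⟨hp, fun hf => hpe0 (h1 hf)⟩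
  · rintro ⟨hp, hpf⟩
    by_cases h : p ∈ e0
    · exact Or.inl ⟨h, hpf⟩
    · exact Or.inr ⟨hp, h⟩

/-- Suppose `T` is a family of finite-to-one functions from countable ordinals to `ω`,
with functions of every countable domain, pairwise agreeing modulo finite on common
domains, and closed under finite modifications. Then for `f, g ∈ T` with the same domain,
`h(f,g)(e) = g ∪ (e ∖ f)` is a well-defined level-preserving isomorphism of the trees
`T↾f` and `T↾g` (ordered by reverse inclusion), and the family `{h(f,g)}` satisfies
commutativity and coherence. -/
theorem coherent_family_on_todorcevic_tree (T : Set (Set (Ordinal × ℕ)))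
    (h1 : ∀ f ∈ T, ∃ α : Ordinal, α < omega1 ∧ IsFnOn f α ∧ FinToOne f)
    (h2 : ∀ α : Ordinal, α < omega1 → ∃ f ∈ T, IsFnOn f α)
    (h3 : ∀ f ∈ T, ∀ g ∈ T,
      {p : Ordinal × ℕ | p ∈ f ∧ p ∉ g ∧ ∃ m : ℕ, (p.1, m) ∈ g}.Finite)
    (h4 : ∀ f ∈ T, ∀ α : Ordinal, IsFnOn f α → ∀ f' : Set (Ordinal × ℕ),
      IsFnOn f' α → FinToOne f' → ((f \ f') ∪ (f' \ f)).Finite → f' ∈ T) :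
    ∀ f ∈ T, ∀ g ∈ T, ∀ α : Ordinal, α < omega1 → IsFnOn f α → IsFnOn g α →
      -- well-defined and level-preserving
      (∀ e ∈ cone T f, coherMap f g e ∈ cone T g ∧
        ∀ β : Ordinal, IsFnOn e β → IsFnOn (coherMap f g e) β) ∧
      -- bijective: mutually inverse
      (∀ e ∈ cone T f, coherMap g f (coherMap f g e) = e) ∧
      (∀ e' ∈ cone T g, coherMap f g (coherMap g f e') = e') ∧
      -- order-isomorphism (for the tree order = reverse inclusion)
      (∀ e ∈ cone T f, ∀ e' ∈ cone T f, e ⊆ e' → coherMap f g e ⊆ coherMap f g e') ∧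
      -- commutativity
      (∀ k ∈ T, IsFnOn k α →
        ∀ e ∈ cone T f, coherMap g k (coherMap f g e) = coherMap f k e) ∧
      -- coherence
      (∀ e₀ ∈ T, f ⊆ e₀ →
        ∀ e ∈ cone T e₀, coherMap e₀ (coherMap f g e₀) e = coherMap f g e) := by
  intro f hfT g hgT α hαω hfα hgα
  obtain ⟨αg, -, -, hgfin⟩ := h1 g hgT
  -- symmetric differences of same-domain members are finite
  have hdiff : ∀ a ∈ T, IsFnOn a α → ∀ b ∈ T, IsFnOn b α → (a \ b).Finite := by
    intro a haT ha b hbT hb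
    refine (h3 a haT b hbT).subset ?_
    rintro p ⟨hpa, hpb⟩
    obtain ⟨m, hm, -⟩ := hb.2 p.1 (ha.1 p hpa)
    exact ⟨hpa, hpb, m, hm⟩
  -- analysis of the restriction case
  have hcase : ∀ a : Set (Ordinal × ℕ), IsFnOn a α →
      ∀ e : Set (Ordinal × ℕ), (e ⊆ a ∨ a ⊆ e) → ¬ a ⊆ e →
      ∀ β, IsFnOn e β → e ⊆ a ∧ β < α := by
    intro a haα e hcmp hnae β heβ
    have hea : e ⊆ a := hcmp.resolve_right hnae
    refine ⟨hea, ?_⟩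
    rcases lt_or_eq_of_le (fn_dom_le heβ haα hea) with h | h
    · exact h
    · exact absurd (fn_eq_of_subset (h ▸ heβ) haα hea) hnae
  refine ⟨?_, ?_, ?_, ?_, ?_, ?_⟩
  -- 1. well-defined and level-preserving
  · rintro e ⟨heT, hcmp⟩
    obtain ⟨β, hβω, heβ, hefin⟩ := h1 e heT
    by_cases hfe : f ⊆ e
    · simp only [coherMap, if_pos hfe]
      have hh : IsFnOn (g ∪ e \ f) β := union_isFnOn hfα hgα heβ hfe
      have hhfin : FinToOne (g ∪ e \ f) := by
        intro m
        refine ((hgfin m).union (hefin m)).subset ?_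
        rintro γ (hγ | ⟨hγ, -⟩)
        · exact Or.inl hγ
        · exact Or.inr hγ
      have hsd : ((e \ (g ∪ e \ f)) ∪ ((g ∪ e \ f) \ e)).Finite := by
        refine ((hdiff f hfT hfα g hgT hgα).union (hdiff g hgT hgα f hfT hfα)).subset ?_
        rintro p (⟨hpe, hpn⟩ | ⟨hpg | ⟨hpe, hpf⟩, hpne⟩)
        · rw [Set.mem_union] at hpn
          push_neg at hpn
          have hpf : p ∈ f := by
            by_contra h
            exact hpn.2 ⟨hpe, h⟩
          exact Or.inl ⟨hpf, hpn.1⟩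
        · exact Or.inr ⟨hpg, fun h => hpne (hfe h)⟩
        · exact absurd hpe hpne
      refine ⟨⟨h4 e heT β heβ _ hh hhfin hsd, Or.inr Set.subset_union_left⟩, ?_⟩
      intro β' heβ'
      exact union_isFnOn hfα hgα heβ' hfe
    · simp only [coherMap, if_neg hfe]
      obtain ⟨hef, hβα⟩ := hcase f hfα e hcmp hfe β heβ
      have hh : IsFnOn {p ∈ g | ∃ m : ℕ, (p.1, m) ∈ e} β :=
        restrict_isFnOn hgα heβ hβα.le
      have hhfin : FinToOne {p ∈ g | ∃ m : ℕ, (p.1, m) ∈ e} :=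
        fun m => (hgfin m).subset (fun γ hγ => hγ.1)
      have hsd : ((e \ {p ∈ g | ∃ m : ℕ, (p.1, m) ∈ e}) ∪
          ({p ∈ g | ∃ m : ℕ, (p.1, m) ∈ e} \ e)).Finite := by
        refine ((hdiff f hfT hfα g hgT hgα).union (hdiff g hgT hgα f hfT hfα)).subset ?_
        rintro p (⟨hpe, hpn⟩ | ⟨⟨hpg, m, hm⟩, hpne⟩)
        · exact Or.inl ⟨hef hpe, fun hpg => hpn ⟨hpg, p.2, by simpa using hpe⟩⟩
        · exact Or.inr ⟨hpg, fun hpf => hpne (restrict_mem heβ hfα hef hpf (heβ.1 (p.1, m) hm))⟩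
      exact ⟨⟨h4 e heT β heβ _ hh hhfin hsd, Or.inl fun p hp => hp.1⟩,
        fun β' heβ' => restrict_isFnOn hgα heβ' (fn_dom_le heβ' hfα hef)⟩
  -- 2. left inverse
  · rintro e ⟨heT, hcmp⟩
    obtain ⟨β, -, heβ, -⟩ := h1 e heT
    by_cases hfe : f ⊆ e
    · simp only [coherMap, if_pos hfe,
        if_pos (Set.subset_union_left : g ⊆ g ∪ e \ f)]
      rw [union_diff_cancel' hfα hgα heβ hfe, Set.union_diff_cancel hfe]
    · obtain ⟨hef, hβα⟩ := hcase f hfα e hcmp hfe β heβ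
      have hh : IsFnOn {p ∈ g | ∃ m : ℕ, (p.1, m) ∈ e} β :=
        restrict_isFnOn hgα heβ hβα.le
      have hns : ¬ g ⊆ {p ∈ g | ∃ m : ℕ, (p.1, m) ∈ e} :=
        not_subset_restrict hgα heβ hβα
      simp only [coherMap, if_neg hfe, if_neg hns]
      rw [restrict_congr hh heβ, restrict_eq_self hfα heβ hef]
  -- 3. right inverse
  · rintro e' ⟨heT, hcmp⟩
    obtain ⟨β, -, heβ, -⟩ := h1 e' heT
    by_cases hge : g ⊆ e'
    · simp only [coherMap, if_pos hge,
        if_pos (Set.subset_union_left : f ⊆ f ∪ e' \ g)]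
      rw [union_diff_cancel' hgα hfα heβ hge, Set.union_diff_cancel hge]
    · obtain ⟨heg, hβα⟩ := hcase g hgα e' hcmp hge β heβ
      have hh : IsFnOn {p ∈ f | ∃ m : ℕ, (p.1, m) ∈ e'} β :=
        restrict_isFnOn hfα heβ hβα.le
      have hns : ¬ f ⊆ {p ∈ f | ∃ m : ℕ, (p.1, m) ∈ e'} :=
        not_subset_restrict hfα heβ hβα
      simp only [coherMap, if_neg hge, if_neg hns]
      rw [restrict_congr hh heβ, restrict_eq_self hgα heβ heg]
  -- 4. monotone
  · rintro e ⟨heT, hcmp⟩ e' ⟨heT', hcmp'⟩ hee'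
    by_cases hfe : f ⊆ e
    · have hfe' : f ⊆ e' := hfe.trans hee'
      simp only [coherMap, if_pos hfe, if_pos hfe']
      exact Set.union_subset_union_right g (fun p hp => ⟨hee' hp.1, hp.2⟩)
    · by_cases hfe' : f ⊆ e'
      · simp only [coherMap, if_neg hfe, if_pos hfe']
        exact fun p hp => Or.inl hp.1
      · simp only [coherMap, if_neg hfe, if_neg hfe']
        rintro p ⟨hp, m, hm⟩
        exact ⟨hp, m, hee' hm⟩
  -- 5. commutativity
  · rintro k hkT hkα e ⟨heT, hcmp⟩
    obtain ⟨β, -, heβ, -⟩ := h1 e heT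
    by_cases hfe : f ⊆ e
    · simp only [coherMap, if_pos hfe,
        if_pos (Set.subset_union_left : g ⊆ g ∪ e \ f)]
      rw [union_diff_cancel' hfα hgα heβ hfe]
    · obtain ⟨hef, hβα⟩ := hcase f hfα e hcmp hfe β heβ
      have hh : IsFnOn {p ∈ g | ∃ m : ℕ, (p.1, m) ∈ e} β :=
        restrict_isFnOn hgα heβ hβα.le
      have hns : ¬ g ⊆ {p ∈ g | ∃ m : ℕ, (p.1, m) ∈ e} :=
        not_subset_restrict hgα heβ hβα
      simp only [coherMap, if_neg hfe, if_neg hns]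
      exact restrict_congr hh heβ
  -- 6. coherence
  · rintro e₀ he₀T hfe₀ e ⟨heT, hcmp⟩
    obtain ⟨δ, -, he₀δ, -⟩ := h1 e₀ he₀T
    obtain ⟨β, -, heβ, -⟩ := h1 e heT
    rw [show coherMap f g e₀ = g ∪ e₀ \ f from by simp only [coherMap, if_pos hfe₀]]
    by_cases he₀e : e₀ ⊆ e
    · have hfe : f ⊆ e := hfe₀.trans he₀e
      simp only [coherMap, if_pos he₀e, if_pos hfe]
      rw [Set.union_assoc, diff_union_diff hfe₀ he₀e]
    · have hee₀ : e ⊆ e₀ := hcmp.resolve_right he₀e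
      by_cases hαβ : α ≤ β
      · have hfe : f ⊆ e := fun p hp =>
          restrict_mem heβ he₀δ hee₀ (hfe₀ hp) (lt_of_lt_of_le (hfα.1 p hp) hαβ)
        simp only [coherMap, if_neg he₀e, if_pos hfe]
        ext p
        simp only [Set.mem_setOf_eq, Set.mem_union, Set.mem_diff]
        constructor
        · rintro ⟨hpg | ⟨hpe₀, hpf⟩, m, hm⟩
          · exact Or.inl hpg
          · exact Or.inr ⟨restrict_mem heβ he₀δ hee₀ hpe₀ (heβ.1 (p.1, m) hm), hpf⟩
        · rintro (hpg | ⟨hpe, hpf⟩)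
          · obtain ⟨m, hm, -⟩ := heβ.2 p.1 (lt_of_lt_of_le (hgα.1 p hpg) hαβ)
            exact ⟨Or.inl hpg, m, hm⟩
          · exact ⟨Or.inr ⟨hee₀ hpe, hpf⟩, p.2, by simpa using hpe⟩
      · push_neg at hαβ
        have hnfe : ¬ f ⊆ e := fun hfe =>
          absurd (fn_dom_le hfα heβ hfe) (not_le.mpr hαβ)
        simp only [coherMap, if_neg he₀e, if_neg hnfe]
        ext p
        simp only [Set.mem_setOf_eq, Set.mem_union, Set.mem_diff]
        constructor
        · rintro ⟨hpg | ⟨hpe₀, hpf⟩, m, hm⟩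
          · exact ⟨hpg, m, hm⟩
          · exact absurd ((heβ.1 (p.1, m) hm).trans hαβ)
              (not_lt.mpr (diff_coord_ge (p := p) hfα he₀δ hfe₀ hpe₀ hpf))
        · rintro ⟨hpg, m, hm⟩
          exact ⟨Or.inl hpg, m, hm⟩

end
end

section
/- If two unbounded sequences b, c : ω₁ → ω^ω are locked, then b is an unbounded sequence in every forcing extension in which c is an unbounded sequence, and vice versa (i.e., they are ≤_𝔟-equivalent). In particular, if there is an infinite x ⊆ ω such that each b(α)↾x is eventually dominated by some c(β)↾x and each c(α)↾x is eventually dominated by some b(β)↾x, then any upper bound (in eventual domination on all of ω) for {c(α) : α ∈ ω₁} yields an upper bound for {b(α) : α ∈ ω₁}. -/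
noncomputable section

open Filter

lemma locked_aux (b c : Ordinal → (ℕ → ℕ))
    (hb_mono : ∀ α < omega1, Monotone (b α))
    (x : Set ℕ) (hx : x.Infinite)
    (hlock : ∀ α < omega1, ∃ β < omega1, {n | n ∈ x ∧ c β n < b α n}.Finite)
    (h : ℕ → ℕ) (hh : ∀ α < omega1, ∀ᶠ n in atTop, c α n ≤ h n) :
    ∃ h' : ℕ → ℕ, ∀ α < omega1, ∀ᶠ n in atTop, b α n ≤ h' n := by
  obtain ⟨f, hfx, hfg⟩ : ∃ f : ℕ → ℕ, (∀ n, f n ∈ x) ∧ ∀ n, n ≤ f n := by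
    choose f h1 h2 using fun n => hx.exists_gt n
    exact ⟨f, h1, fun n => (h2 n).le⟩
  refine ⟨fun n => h (f n), fun α hα => ?_⟩
  obtain ⟨β, hβ, hfin⟩ := hlock α hα
  obtain ⟨N, hN⟩ := hfin.bddAbove
  obtain ⟨M, hM⟩ := eventually_atTop.mp (hh β hβ)
  refine eventually_atTop.mpr ⟨max (N + 1) M, fun n hn => ?_⟩
  have hn1 : N + 1 ≤ n := le_of_max_le_left hn
  have hn2 : M ≤ n := le_of_max_le_right hn
  have hmem : f n ∉ {m | m ∈ x ∧ c β m < b α m} := by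
    intro hmem
    have h2 := hN hmem
    have h3 := hfg n
    omega
  have h1 : b α (f n) ≤ c β (f n) := by
    by_contra hc
    exact hmem ⟨hfx n, lt_of_not_ge hc⟩
  calc b α n ≤ b α (f n) := hb_mono α hα (hfg n)
    _ ≤ c β (f n) := h1
    _ ≤ h (f n) := hM _ (le_trans hn2 (hfg n))

/-- If two (modulo-finite increasing) `ω₁`-sequences `b, c` of increasing functions in
`ω^ω` are locked via an infinite set `x ⊆ ω` (each `b(α)↾x` is eventually dominated by
some `c(β)↾x` and vice versa), then any upper bound in the eventual domination order for
`{c(α) : α < ω₁}` yields an upper bound for `{b(α) : α < ω₁}`, and vice versa; in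
particular locked sequences are `≤_𝔟`-equivalent. -/
theorem locked_sequences_b_equivalent (b c : Ordinal → (ℕ → ℕ))
    (hb_mono : ∀ α < omega1, Monotone (b α)) (hc_mono : ∀ α < omega1, Monotone (c α))
    (hb_inc : ∀ α β : Ordinal, α < β → β < omega1 → ∀ᶠ n in atTop, b α n ≤ b β n)
    (hc_inc : ∀ α β : Ordinal, α < β → β < omega1 → ∀ᶠ n in atTop, c α n ≤ c β n)
    (x : Set ℕ) (hx : x.Infinite)
    (hlock₁ : ∀ α < omega1, ∃ β < omega1, {n | n ∈ x ∧ b β n < c α n}.Finite)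
    (hlock₂ : ∀ α < omega1, ∃ β < omega1, {n | n ∈ x ∧ c β n < b α n}.Finite) :
    ((∃ h : ℕ → ℕ, ∀ α < omega1, ∀ᶠ n in atTop, c α n ≤ h n) →
        ∃ h : ℕ → ℕ, ∀ α < omega1, ∀ᶠ n in atTop, b α n ≤ h n) ∧
      ((∃ h : ℕ → ℕ, ∀ α < omega1, ∀ᶠ n in atTop, b α n ≤ h n) →
        ∃ h : ℕ → ℕ, ∀ α < omega1, ∀ᶠ n in atTop, c α n ≤ h n) := by
  constructor
  · rintro ⟨h, hh⟩
    exact locked_aux b c hb_mono x hx hlock₂ h hh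
  · rintro ⟨h, hh⟩
    exact locked_aux c b hc_mono x hx hlock₁ h hh

end
end
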